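/- Exponent separation theorem: for distinct indices i, j ≥ 1 with i ≠ j (hence ij > 1), the equation p_i(α) = p_j(α) holds if and only if α = 1/2 or α = -1/(ij - 1); consequently, for α ∈ [0,1] with α ≠ 1/2, the exponents p_i(α) and p_j(α) are distinct. -/

import Mathlib

noncomputable def patpExp (i : ℝ) (α : ℝ) : ℝ :=
  1 / i + (4 - i - 3 / i) * α + (2 * i - 4 + 2 / i) * α ^ 2

/-! Clearing denominators, `i j (p_i(α) - p_j(α)) = (i - j)(2α - 1)((ij - 1)α + 1)`, so the two
exponents agree exactly at the roots `1/2` and `-1/(ij - 1)`; the latter is negative when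
`ij > 1`, hence outside `[0, 1]`. -/

lemma patpExp_sub_mul {i j : ℝ} (hi : i ≠ 0) (hj : j ≠ 0) (α : ℝ) :
    (patpExp i α - patpExp j α) * (i * j) = (i - j) * (2 * α - 1) * ((i * j - 1) * α + 1) := by
  unfold patpExp
  field_simp
  ring

lemma one_lt_mul_of_one_le_of_ne {i j : ℝ} (hi : 1 ≤ i) (hj : 1 ≤ j) (hij : i ≠ j) :
    1 < i * j := by
  rcases hi.lt_or_eq with hi | rfl
  · nlinarith
  · simpa using lt_of_le_of_ne hj hij

lemma patpExp_eq_iff {i j : ℝ} (hi : i ≠ 0) (hj : j ≠ 0) (hij : i ≠ j) (hij1 : i * j ≠ 1)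
    (α : ℝ) : patpExp i α = patpExp j α ↔ α = 1 / 2 ∨ α = -(1 / (i * j - 1)) := by
  have hij1' : i * j - 1 ≠ 0 := sub_ne_zero.mpr hij1
  have h2 : 2 * α - 1 = 0 ↔ α = 1 / 2 := by constructor <;> intro h <;> linarith
  have h3 : (i * j - 1) * α + 1 = 0 ↔ α = -(1 / (i * j - 1)) := by
    rw [← eq_neg_iff_add_eq_zero, ← neg_div, eq_div_iff hij1', mul_comm]
  rw [← sub_eq_zero, ← mul_left_inj' (mul_ne_zero hi hj), zero_mul, patpExp_sub_mul hi hj,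
    mul_eq_zero, mul_eq_zero, sub_eq_zero, h2, h3]
  simp [hij]

theorem exponent_separation (i j : ℝ) (hi : 1 ≤ i) (hj : 1 ≤ j) (hij : i ≠ j) :
    (∀ α : ℝ, patpExp i α = patpExp j α ↔ α = 1 / 2 ∨ α = -(1 / (i * j - 1))) ∧
    (∀ α : ℝ, α ∈ Set.Icc (0 : ℝ) 1 → α ≠ 1 / 2 → patpExp i α ≠ patpExp j α) := by
  have hij1 : 1 < i * j := one_lt_mul_of_one_le_of_ne hi hj hij
  have key := patpExp_eq_iff (by positivity) (by positivity) hij hij1.ne'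
  refine ⟨key, fun α hα hhalf heq => ?_⟩
  rcases (key α).mp heq with h | h
  · exact hhalf h
  · have : α < 0 := h ▸ neg_neg_of_pos (one_div_pos.mpr (sub_pos.mpr hij1))
    exact this.not_ge hα.1
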